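/- arXiv:2206.11040 — 5 statements merged into one kernel-verified Lean document; each statement's English description precedes it below -/
import Mathlib

section
/- Let n ≥ 1 and let x : Fin n → Fin n → ℤ be a binary matrix (every entry 0 or 1). If g(x) ≠ 0 (i.e. x is infeasible), then g(x) ≥ 2. In other words, the minimum value of the two-way one-hot constraint function over infeasible binary matrices is at least 2 (this is the quantity γ used to define the MOMC penalty weight). -/
lemma aux_sum_sq_ge_two {ι : Type*} [Fintype ι] [DecidableEq ι] (a : ι → ℤ)
    (h0 : ∑ i, a i = 0) (hne : ∑ i, a i ^ 2 ≠ 0) : 2 ≤ ∑ i, a i ^ 2 := by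
  have hj : ∃ j, a j ≠ 0 := by
    by_contra h
    push_neg at h
    exact hne (Finset.sum_eq_zero fun i _ => by rw [h i]; ring)
  obtain ⟨j, hj⟩ := hj
  have hl : ∃ l, l ≠ j ∧ a l ≠ 0 := by
    by_contra h
    push_neg at h
    have : ∑ i, a i = a j := by
      rw [← Finset.sum_subset (Finset.subset_univ {j})]
      · simp
      · intro i _ hi
        simp only [Finset.mem_singleton] at hi
        exact h i hi
    omega
  obtain ⟨l, hlj, hl⟩ := hl
  have hsub : ({j, l} : Finset ι) ⊆ Finset.univ := Finset.subset_univ _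
  have h1 : ∑ i ∈ ({j, l} : Finset ι), a i ^ 2 ≤ ∑ i, a i ^ 2 :=
    Finset.sum_le_sum_of_subset_of_nonneg hsub fun i _ _ => sq_nonneg _
  have hpair : ∑ i ∈ ({j, l} : Finset ι), a i ^ 2 = a j ^ 2 + a l ^ 2 :=
    Finset.sum_pair (fun h => hlj h.symm)
  have hj2 : 1 ≤ a j ^ 2 := by have : 0 < a j ^ 2 := by positivity
                               omega
  have hl2 : 1 ≤ a l ^ 2 := by have : 0 < a l ^ 2 := by positivity
                               omega
  omega

/-- For a binary matrix `x : Fin n → Fin n → ℤ`, if the two-way one-hot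
constraint function is nonzero (i.e. `x` is infeasible), then its value is at
least `2` (the quantity `γ` used by the MOMC penalty weight). -/
theorem two_way_one_hot_infeasible_ge_two
    (n : ℕ) (hn : 1 ≤ n) (x : Fin n → Fin n → ℤ)
    (hx : ∀ i k : Fin n, x i k = 0 ∨ x i k = 1)
    (hinf : (∑ i : Fin n, (1 - ∑ k : Fin n, x i k) ^ 2) +
        (∑ k : Fin n, (1 - ∑ i : Fin n, x i k) ^ 2) ≠ 0) :
    2 ≤ (∑ i : Fin n, (1 - ∑ k : Fin n, x i k) ^ 2) +
        (∑ k : Fin n, (1 - ∑ i : Fin n, x i k) ^ 2) := by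
  set a : Fin n ⊕ Fin n → ℤ :=
    Sum.elim (fun i => 1 - ∑ k : Fin n, x i k) (fun k => -(1 - ∑ i : Fin n, x i k)) with ha
  have hsq : ∑ p, a p ^ 2 =
      (∑ i : Fin n, (1 - ∑ k : Fin n, x i k) ^ 2) +
        (∑ k : Fin n, (1 - ∑ i : Fin n, x i k) ^ 2) := by
    simp only [Fintype.sum_sum_type, ha, Sum.elim_inl, Sum.elim_inr, neg_sq]
  have h0 : ∑ p, a p = 0 := by
    rw [Fintype.sum_sum_type]
    simp only [ha, Sum.elim_inl, Sum.elim_inr, Finset.sum_neg_distrib, Finset.sum_sub_distrib]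
    rw [Finset.sum_comm]
    ring
  have := aux_sum_sq_ge_two a h0 (by rw [hsq]; exact hinf)
  linarith [hsq ▸ this]
end

section
/- Let n ≥ 1, let σ be a permutation of Fin n, let x be the permutation matrix of σ, and let x' : Fin n → Fin n → ℤ be a binary matrix that differs from x in exactly one entry. Then g(x') = 2. In particular, every binary matrix obtained from a feasible solution by a single bit flip is infeasible, and the value γ = 2 is attained: for permutation problems represented as two-way one-hot, g of any solution that is one flip away from a feasible solution equals 2. -/
/-- If `x` is the permutation matrix of a permutation `σ` of `Fin n`
and the binary matrix `x'` differs from `x` in exactly one entry, then the two-way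
one-hot constraint function of `x'` equals `2`; in particular `x'` is infeasible. -/
theorem single_flip_from_permutation_matrix_constraint_eq_two
    (n : ℕ) (hn : 1 ≤ n) (σ : Equiv.Perm (Fin n))
    (x x' : Fin n → Fin n → ℤ)
    (hxσ : ∀ i k : Fin n, x i k = if σ i = k then 1 else 0)
    (hx' : ∀ i k : Fin n, x' i k = 0 ∨ x' i k = 1)
    (p q : Fin n)
    (hflip : x' p q ≠ x p q)
    (hsame : ∀ i k : Fin n, ¬(i = p ∧ k = q) → x' i k = x i k) :
    (∑ i : Fin n, (1 - ∑ k : Fin n, x' i k) ^ 2) +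
        (∑ k : Fin n, (1 - ∑ i : Fin n, x' i k) ^ 2) = 2 ∧
    (∑ i : Fin n, (1 - ∑ k : Fin n, x' i k) ^ 2) +
        (∑ k : Fin n, (1 - ∑ i : Fin n, x' i k) ^ 2) ≠ 0 := by
  have hxval : ∀ i k, x i k = 0 ∨ x i k = 1 := by
    intro i k; rw [hxσ]; split <;> simp
  set ε := x' p q - x p q with hε
  have hε2 : ε ^ 2 = 1 := by
    rcases hx' p q with h1 | h1 <;> rcases hxval p q with h2 | h2 <;>
      simp [hε, h1, h2] at hflip ⊢
  -- row sums of x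
  have hrow : ∀ i, ∑ k : Fin n, x i k = 1 := by
    intro i; simp [hxσ]
  have hcol : ∀ k, ∑ i : Fin n, x i k = 1 := by
    intro k
    simp [hxσ, Equiv.apply_eq_iff_eq_symm_apply]
  -- row sums of x'
  have hrow' : ∀ i, i ≠ p → ∑ k : Fin n, x' i k = 1 := by
    intro i hi
    rw [← hrow i]
    exact Finset.sum_congr rfl fun k _ => hsame i k (fun h => hi h.1)
  have hrowp : ∑ k : Fin n, x' p k = 1 + ε := by
    have : ∑ k : Fin n, (x' p k - x p k) = ε := by
      rw [Finset.sum_eq_single q]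
      · intro k _ hk
        rw [hsame p k (fun h => hk h.2)]; ring
      · simp
    have h2 := Finset.sum_sub_distrib (f := fun k => x' p k) (g := fun k => x p k)
      (s := Finset.univ)
    rw [h2, hrow p] at this
    linarith
  have hcol' : ∀ k, k ≠ q → ∑ i : Fin n, x' i k = 1 := by
    intro k hk
    rw [← hcol k]
    exact Finset.sum_congr rfl fun i _ => hsame i k (fun h => hk h.2)
  have hcolq : ∑ i : Fin n, x' i q = 1 + ε := by
    have : ∑ i : Fin n, (x' i q - x i q) = ε := by
      rw [Finset.sum_eq_single p]
      · intro i _ hi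
        rw [hsame i q (fun h => hi h.1)]; ring
      · simp
    have h2 := Finset.sum_sub_distrib (f := fun i => x' i q) (g := fun i => x i q)
      (s := Finset.univ)
    rw [h2, hcol q] at this
    linarith
  have hsum1 : (∑ i : Fin n, (1 - ∑ k : Fin n, x' i k) ^ 2) = 1 := by
    rw [Finset.sum_eq_single p]
    · rw [hrowp, show (1 - (1 + ε))^2 = ε^2 by ring, hε2]
    · intro i _ hi; rw [hrow' i hi]; ring
    · simp
  have hsum2 : (∑ k : Fin n, (1 - ∑ i : Fin n, x' i k) ^ 2) = 1 := by
    rw [Finset.sum_eq_single q]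
    · rw [hcolq, show (1 - (1 + ε))^2 = ε^2 by ring, hε2]
    · intro k _ hk; rw [hcol' k hk]; ring
    · simp
  rw [hsum1, hsum2]
  norm_num
end

section
/- Let n ≥ 1, let d : Fin n → Fin n → ℝ be a distance matrix, let τ be a permutation of Fin n (where τ(k) is the city visited at position k), and let x be the binary matrix with x_{l,k} = 1 if τ(k) = l and 0 otherwise. Then the TSP QUBO cost with cyclic successor, c(x) = Σ_l Σ_i d_{l,i} · Σ_k x_{l,k}·x_{i,k+1 mod n}, equals the cyclic tour length Σ_k d_{τ(k), τ(k+1 mod n)}. -/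
/-- For a tour given by a permutation `τ` of positions to cities, with
`x l k = 1` iff city `l` is visited at position `k`, the TSP QUBO cost with cyclic
successor equals the cyclic tour length:
`Σ_l Σ_i d l i · Σ_k x l k · x i (k+1) = Σ_k d (τ k) (τ (k+1))` (addition in `Fin n`). -/
theorem tsp_qubo_cost_on_permutation_matrix
    (n : ℕ) [NeZero n] (hn : 1 ≤ n) (d : Fin n → Fin n → ℝ)
    (τ : Equiv.Perm (Fin n)) (x : Fin n → Fin n → ℝ)
    (hxτ : ∀ l k : Fin n, x l k = if τ k = l then 1 else 0) :
    (∑ l : Fin n, ∑ i : Fin n, d l i * ∑ k : Fin n, x l k * x i (k + 1)) =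
      ∑ k : Fin n, d (τ k) (τ (k + 1)) := by
  simp only [hxτ, Finset.mul_sum]
  refine Eq.trans (Finset.sum_congr rfl fun l _ => Finset.sum_comm) ?_
  rw [Finset.sum_comm]
  refine Finset.sum_congr rfl fun k _ => ?_
  simp
end

section
/- Let m ≥ 1, C : Fin m → Fin m → ℝ, and c(x) = Σ_{i,j} x_i·C_{i,j}·x_j. For p ∈ Fin m set a_j = C_{p,j} + C_{j,p} for j ≠ p, and define W_p = max( −C_{p,p} − Σ_{j≠p} min(a_j, 0), C_{p,p} + Σ_{j≠p} max(a_j, 0) ). Then for every binary vector x (entries 0 or 1) and the vector x' obtained from x by flipping coordinate p, |c(x') − c(x)| ≤ W_p. Consequently, for every binary x and every x' differing from x in exactly one coordinate, |c(x') − c(x)| ≤ VLM := max_{p} W_p. -/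
/-- The Verma–Lewis bound. With
`W p = max(−C p p − Σ_{j≠p} min(C p j + C j p, 0), C p p + Σ_{j≠p} max(C p j + C j p, 0))`,
the change in the QUBO objective caused by flipping bit `p` of any binary vector is
bounded in absolute value by `W p`, and hence the change caused by any single flip is
bounded by `VLM = max_p W p`. -/
theorem qubo_vlm_bound
    (m : ℕ) (hm : 1 ≤ m) (C : Fin m → Fin m → ℝ) :
    (∀ x : Fin m → ℝ, (∀ i : Fin m, x i = 0 ∨ x i = 1) → ∀ p : Fin m,
      ∀ x' : Fin m → ℝ, x' p = 1 - x p → (∀ j : Fin m, j ≠ p → x' j = x j) →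
        |(∑ i : Fin m, ∑ j : Fin m, x' i * C i j * x' j) -
            (∑ i : Fin m, ∑ j : Fin m, x i * C i j * x j)| ≤
          max (-(C p p) - ∑ j ∈ Finset.univ.erase p, min (C p j + C j p) 0)
            (C p p + ∑ j ∈ Finset.univ.erase p, max (C p j + C j p) 0)) ∧
    (∀ x x' : Fin m → ℝ, (∀ i : Fin m, x i = 0 ∨ x i = 1) →
      (∀ i : Fin m, x' i = 0 ∨ x' i = 1) →
      (∃ p : Fin m, x' p ≠ x p ∧ ∀ j : Fin m, j ≠ p → x' j = x j) →
        |(∑ i : Fin m, ∑ j : Fin m, x' i * C i j * x' j) -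
            (∑ i : Fin m, ∑ j : Fin m, x i * C i j * x j)| ≤
          Finset.univ.sup' ⟨⟨0, hm⟩, Finset.mem_univ _⟩ (fun p : Fin m =>
            max (-(C p p) - ∑ j ∈ Finset.univ.erase p, min (C p j + C j p) 0)
              (C p p + ∑ j ∈ Finset.univ.erase p, max (C p j + C j p) 0))) := by
  have key : ∀ x : Fin m → ℝ, (∀ i : Fin m, x i = 0 ∨ x i = 1) → ∀ p : Fin m,
      ∀ x' : Fin m → ℝ, x' p = 1 - x p → (∀ j : Fin m, j ≠ p → x' j = x j) →
        |(∑ i : Fin m, ∑ j : Fin m, x' i * C i j * x' j) -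
            (∑ i : Fin m, ∑ j : Fin m, x i * C i j * x j)| ≤
          max (-(C p p) - ∑ j ∈ Finset.univ.erase p, min (C p j + C j p) 0)
            (C p p + ∑ j ∈ Finset.univ.erase p, max (C p j + C j p) 0) := by
    intro x hx p x' hp hj
    set E := Finset.univ.erase p with hE
    have hmemE : ∀ j, j ∈ E → j ≠ p := fun j hj' => Finset.ne_of_mem_erase hj'
    have hxp2 : x p * x p = x p := by rcases hx p with h | h <;> simp [h]
    have hx'p2 : x' p * x' p = x' p := by rcases hx p with h | h <;> simp [hp, h]
    have hsplit : ∀ y : Fin m → ℝ,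
        (∑ i : Fin m, ∑ j : Fin m, y i * C i j * y j)
          = y p * C p p * y p + (∑ j ∈ E, y p * C p j * y j)
            + ((∑ i ∈ E, y i * C i p * y p) + ∑ i ∈ E, ∑ j ∈ E, y i * C i j * y j) := by
      intro y
      rw [← Finset.add_sum_erase _ _ (Finset.mem_univ p)]
      congr 1
      · rw [← Finset.add_sum_erase _ _ (Finset.mem_univ p)]
      · rw [← Finset.sum_add_distrib]
        refine Finset.sum_congr rfl fun i _ => ?_
        rw [← Finset.add_sum_erase _ _ (Finset.mem_univ p)]
    have h1 : (∑ j ∈ E, x' p * C p j * x' j) = ∑ j ∈ E, x' p * C p j * x j :=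
      Finset.sum_congr rfl fun j hj' => by rw [hj j (hmemE j hj')]
    have h2 : (∑ i ∈ E, x' i * C i p * x' p) = ∑ i ∈ E, x i * C i p * x' p :=
      Finset.sum_congr rfl fun i hi' => by rw [hj i (hmemE i hi')]
    have h3 : (∑ i ∈ E, ∑ j ∈ E, x' i * C i j * x' j)
        = ∑ i ∈ E, ∑ j ∈ E, x i * C i j * x j := by
      refine Finset.sum_congr rfl fun i hi' => Finset.sum_congr rfl fun j hj' => ?_
      rw [hj i (hmemE i hi'), hj j (hmemE j hj')]
    have hsum : (∑ j ∈ E, (x' p - x p) * ((C p j + C j p) * x j))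
        = ((∑ j ∈ E, x' p * C p j * x j) - ∑ j ∈ E, x p * C p j * x j)
          + ((∑ i ∈ E, x i * C i p * x' p) - ∑ i ∈ E, x i * C i p * x p) := by
      rw [← Finset.sum_sub_distrib, ← Finset.sum_sub_distrib, ← Finset.sum_add_distrib]
      exact Finset.sum_congr rfl fun j _ => by ring
    have hdiff : (∑ i : Fin m, ∑ j : Fin m, x' i * C i j * x' j) -
            (∑ i : Fin m, ∑ j : Fin m, x i * C i j * x j)
        = (x' p - x p) * (C p p + ∑ j ∈ E, (C p j + C j p) * x j) := by
      rw [hsplit x', hsplit x, h1, h2, h3, mul_add, Finset.mul_sum]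
      rw [hsum]
      linear_combination C p p * hx'p2 - C p p * hxp2
    have hd : |x' p - x p| = 1 := by
      rcases hx p with h | h <;> rw [hp, h] <;> norm_num
    have hub : (∑ j ∈ E, (C p j + C j p) * x j) ≤ ∑ j ∈ E, max (C p j + C j p) 0 := by
      refine Finset.sum_le_sum fun j _ => ?_
      rcases hx j with h | h
      · rw [h]; simpa using le_max_right (C p j + C j p) 0
      · rw [h, mul_one]; exact le_max_left _ _
    have hlb : (∑ j ∈ E, min (C p j + C j p) 0) ≤ ∑ j ∈ E, (C p j + C j p) * x j := by
      refine Finset.sum_le_sum fun j _ => ?_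
      rcases hx j with h | h
      · rw [h]; simpa using min_le_right (C p j + C j p) 0
      · rw [h, mul_one]; exact min_le_left _ _
    rw [hdiff, abs_mul, hd, one_mul]
    rcases abs_cases (C p p + ∑ j ∈ E, (C p j + C j p) * x j) with ⟨he, _⟩ | ⟨he, _⟩
    · rw [he]; exact le_max_of_le_right (by linarith)
    · rw [he]; exact le_max_of_le_left (by linarith)
  refine ⟨key, ?_⟩
  rintro x x' hx hx' ⟨p, hne, hj⟩
  have hp : x' p = 1 - x p := by
    rcases hx p with h | h <;> rcases hx' p with h' | h' <;>
      simp [h, h'] at hne ⊢ <;> linarith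
  exact le_trans (key x hx p x' hp hj)
    (Finset.le_sup' (fun p : Fin m =>
      max (-(C p p) - ∑ j ∈ Finset.univ.erase p, min (C p j + C j p) 0)
        (C p p + ∑ j ∈ Finset.univ.erase p, max (C p j + C j p) 0)) (Finset.mem_univ p))
end

section
/- Let n ≥ 1 and let c be a real-valued function on binary n×n matrices (entries 0 or 1). Suppose V ≥ 0 is such that |c(x') − c(x)| ≤ V whenever binary matrices x and x' differ in exactly one entry. Let α > V/2. Then for every permutation σ of Fin n with permutation matrix x, and every binary matrix x' differing from x in exactly one entry, c(x) < c(x') + α·g(x'). (This establishes validity of the MOMC penalty weight VLM/γ with γ = 2 against single-flip moves from feasible solutions, since g(x') = 2 for such x'.) -/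
/-- If `V ≥ 0` bounds the single-flip change of a cost `c` on binary
`n × n` matrices and `α > V / 2`, then for every permutation matrix `x` (of some
permutation `σ`) and every binary matrix `x'` differing from `x` in exactly one
entry, `c x < c x' + α · g x'`, where `g` is the two-way one-hot constraint
function (this is the MOMC validity against single flips, using `g x' = 2`). -/
theorem momc_valid_against_single_flips
    (n : ℕ) (hn : 1 ≤ n)
    (c : (Fin n → Fin n → ℤ) → ℝ) (V : ℝ) (hV : 0 ≤ V)
    (hVbound : ∀ x x' : Fin n → Fin n → ℤ,
      (∀ i k : Fin n, x i k = 0 ∨ x i k = 1) →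
      (∀ i k : Fin n, x' i k = 0 ∨ x' i k = 1) →
      (∃ p q : Fin n, x' p q ≠ x p q ∧
        ∀ i k : Fin n, ¬(i = p ∧ k = q) → x' i k = x i k) →
      |c x' - c x| ≤ V)
    (α : ℝ) (hα : α > V / 2) :
    ∀ σ : Equiv.Perm (Fin n), ∀ x x' : Fin n → Fin n → ℤ,
      (∀ i k : Fin n, x i k = if σ i = k then 1 else 0) →
      (∀ i k : Fin n, x' i k = 0 ∨ x' i k = 1) →
      (∃ p q : Fin n, x' p q ≠ x p q ∧
        ∀ i k : Fin n, ¬(i = p ∧ k = q) → x' i k = x i k) →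
      c x < c x' + α * (((∑ i : Fin n, (1 - ∑ k : Fin n, x' i k) ^ 2) +
        (∑ k : Fin n, (1 - ∑ i : Fin n, x' i k) ^ 2) : ℤ) : ℝ) := by
  intro σ x x' hx hx' hdiff
  obtain ⟨p, q, hne, hag⟩ := hdiff
  set d : ℤ := x' p q - x p q with hd
  have hd2 : d ^ 2 = 1 := by
    have hxpq := hx p q
    rcases hx' p q with h1 | h1 <;> by_cases h2 : σ p = q <;>
      simp [h1, h2] at hxpq <;> simp [hd, h1, hxpq, h2] at hne ⊢
  -- entry decomposition for x'
  have hentry : ∀ i k : Fin n, x' i k =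
      x i k + (if i = p ∧ k = q then d else 0) := by
    intro i k
    by_cases h : i = p ∧ k = q
    · obtain ⟨rfl, rfl⟩ := h; simp [hd]
    · simp [h, hag i k h]
  have hrowx : ∀ i : Fin n, ∑ k : Fin n, x i k = 1 := by
    intro i
    simp only [hx]
    rw [Finset.sum_ite_eq Finset.univ (σ i) (fun _ => (1 : ℤ))]
    simp
  have hcolx : ∀ k : Fin n, ∑ i : Fin n, x i k = 1 := by
    intro k
    simp only [hx]
    have : ∀ i : Fin n, (if σ i = k then (1:ℤ) else 0) = if i = σ.symm k then 1 else 0 := by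
      intro i
      congr 1
      simp [Equiv.eq_symm_apply, eq_comm]
    simp_rw [this]
    simp
  have hrow : ∀ i : Fin n, ∑ k : Fin n, x' i k = 1 + (if i = p then d else 0) := by
    intro i
    simp_rw [hentry, Finset.sum_add_distrib, hrowx i]
    congr 1
    by_cases h : i = p
    · subst h
      simp
    · simp [h]
  have hcol : ∀ k : Fin n, ∑ i : Fin n, x' i k = 1 + (if k = q then d else 0) := by
    intro k
    simp_rw [hentry, Finset.sum_add_distrib, hcolx k]
    congr 1
    by_cases h : k = q
    · subst h
      simp
    · simp [h]
  have hg1 : (∑ i : Fin n, (1 - ∑ k : Fin n, x' i k) ^ 2) = 1 := by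
    simp_rw [hrow]
    have : ∀ i : Fin n, (1 - (1 + if i = p then d else 0)) ^ 2 =
        if i = p then 1 else 0 := by
      intro i
      by_cases h : i = p <;> simp [h, hd2] <;> ring_nf <;> simp [hd2]
    simp_rw [this]
    simp
  have hg2 : (∑ k : Fin n, (1 - ∑ i : Fin n, x' i k) ^ 2) = 1 := by
    simp_rw [hcol]
    have : ∀ k : Fin n, (1 - (1 + if k = q then d else 0)) ^ 2 =
        if k = q then 1 else 0 := by
      intro k
      by_cases h : k = q <;> simp [h, hd2] <;> ring_nf <;> simp [hd2]
    simp_rw [this]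
    simp
  have hx01 : ∀ i k : Fin n, x i k = 0 ∨ x i k = 1 := by
    intro i k; rw [hx]; by_cases h : σ i = k <;> simp [h]
  have habs := hVbound x x' hx01 hx' ⟨p, q, hne, hag⟩
  have h1 : c x - c x' ≤ V := by
    have := abs_sub_le_iff.mp habs
    linarith [this.2]
  rw [hg1, hg2]
  push_cast
  linarith
end
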